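/- arXiv:1807.07885 — 2 statements merged into one kernel-verified Lean document; each statement's English description precedes it below -/
import Mathlib

section
/- Define on bounded operators of F = ⊕_k F_k the seminorms ‖F‖_n = sup{‖FΦ‖/‖Φ‖ : 0 ≠ Φ ∈ ⊕_{k≤n}F_k} + sup{‖F*Ψ‖/‖Ψ‖ : 0 ≠ Ψ ∈ ⊕_{k≤n}F_k}. If F is a tensor of degree m and F' a tensor of degree m', then ‖F F'‖_n ≤ ‖F‖_{n+m'} ‖F'‖_n + ‖F‖_n ‖F'‖_{n−m}, where ‖·‖_k := 0 for k < 0. -/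
open ContinuousLinearMap

variable {F : Type*} [NormedAddCommGroup F] [InnerProductSpace ℂ F] [CompleteSpace F]

/-- The subspace `⊕_{0 ≤ k ≤ n} F_k` of a graded Hilbert space (trivial for `n < 0`). -/
noncomputable def gradeLE (V : ℤ → Submodule ℂ F) (n : ℤ) : Submodule ℂ F :=
  ⨆ k ∈ Set.Icc (0 : ℤ) n, V k

/-- The seminorm `‖T‖_n = sup ‖TΦ‖/‖Φ‖ + sup ‖T*Ψ‖/‖Ψ‖`, the suprema running over
nonzero vectors `Φ, Ψ ∈ ⊕_{k ≤ n} F_k`; it equals `0` for `n < 0`. -/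
noncomputable def gradeSeminorm (V : ℤ → Submodule ℂ F) (T : F →L[ℂ] F) (n : ℤ) : ℝ :=
  (⨆ x : { x : F // x ∈ gradeLE V n ∧ x ≠ 0 }, ‖T x.1‖ / ‖x.1‖) +
  (⨆ x : { x : F // x ∈ gradeLE V n ∧ x ≠ 0 }, ‖adjoint T x.1‖ / ‖x.1‖)

/-!
Each half of `‖·‖_n` is an operator norm restricted to `⊕_{k ≤ n} F_k`, and restricted operator
norms are submultiplicative along maps between the restricting sets. Since `T'` maps
`⊕_{k ≤ n} F_k` into `⊕_{k ≤ n + m'} F_k`, and `(T T')* = T'* T*` with `T*` mapping it into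
`⊕_{k ≤ n - m} F_k`, each half for `T T'` is a product of halves for `T` and `T'`, and each half
is bounded by the full seminorm.
-/

section OpNormOn

variable {𝕜 E G H : Type*} [NontriviallyNormedField 𝕜]
  [NormedAddCommGroup E] [NormedSpace 𝕜 E] [NormedAddCommGroup G] [NormedSpace 𝕜 G]
  [NormedAddCommGroup H] [NormedSpace 𝕜 H]

/-- The operator norm of `S` restricted to `s`; it is `0` when `s ⊆ {0}`, as `⨆ ∅ = 0` in `ℝ`. -/
noncomputable def opNormOn (s : Set E) (S : E →L[𝕜] G) : ℝ :=
  ⨆ x : { x : E // x ∈ s ∧ x ≠ 0 }, ‖S x.1‖ / ‖x.1‖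

lemma opNormOn_nonneg (s : Set E) (S : E →L[𝕜] G) : 0 ≤ opNormOn s S :=
  Real.iSup_nonneg fun _ => div_nonneg (norm_nonneg _) (norm_nonneg _)

lemma norm_apply_le_opNormOn {s : Set E} (S : E →L[𝕜] G) {x : E} (hx : x ∈ s) :
    ‖S x‖ ≤ opNormOn s S * ‖x‖ := by
  rcases eq_or_ne x 0 with rfl | hx0
  · simp
  have hbdd : BddAbove (Set.range fun y : { y : E // y ∈ s ∧ y ≠ 0 } => ‖S y.1‖ / ‖y.1‖) := by
    refine ⟨‖S‖, Set.forall_mem_range.2 fun y => ?_⟩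
    exact div_le_of_le_mul₀ (norm_nonneg _) (norm_nonneg _) (S.le_opNorm _)
  rw [← div_le_iff₀ (norm_pos_iff.2 hx0)]
  exact le_ciSup hbdd ⟨x, hx, hx0⟩

lemma opNormOn_le_of_forall {s : Set E} {S : E →L[𝕜] G} {C : ℝ} (hC : 0 ≤ C)
    (h : ∀ x ∈ s, ‖S x‖ ≤ C * ‖x‖) : opNormOn s S ≤ C :=
  Real.iSup_le (fun x => div_le_of_le_mul₀ (norm_nonneg _) hC (h x.1 x.2.1)) hC

lemma opNormOn_comp_le {s : Set E} {t : Set G} {S : G →L[𝕜] H} {S' : E →L[𝕜] G}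
    (h : Set.MapsTo S' s t) :
    opNormOn s (S ∘L S') ≤ opNormOn t S * opNormOn s S' := by
  refine opNormOn_le_of_forall
    (mul_nonneg (opNormOn_nonneg _ _) (opNormOn_nonneg _ _)) fun x hx => ?_
  calc ‖S (S' x)‖ ≤ opNormOn t S * ‖S' x‖ := norm_apply_le_opNormOn S (h hx)
    _ ≤ opNormOn t S * (opNormOn s S' * ‖x‖) :=
      mul_le_mul_of_nonneg_left (norm_apply_le_opNormOn S' hx) (opNormOn_nonneg _ _)
    _ = opNormOn t S * opNormOn s S' * ‖x‖ := (mul_assoc _ _ _).symm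

end OpNormOn

lemma gradeSeminorm_eq (V : ℤ → Submodule ℂ F) (S : F →L[ℂ] F) (n : ℤ) :
    gradeSeminorm V S n = opNormOn (gradeLE V n) S + opNormOn (gradeLE V n) (adjoint S) :=
  rfl

lemma opNormOn_le_gradeSeminorm (V : ℤ → Submodule ℂ F) (S : F →L[ℂ] F) (n : ℤ) :
    opNormOn (gradeLE V n) S ≤ gradeSeminorm V S n :=
  le_add_of_nonneg_right (opNormOn_nonneg _ _)

lemma opNormOn_adjoint_le_gradeSeminorm (V : ℤ → Submodule ℂ F) (S : F →L[ℂ] F) (n : ℤ) :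
    opNormOn (gradeLE V n) (adjoint S) ≤ gradeSeminorm V S n :=
  le_add_of_nonneg_left (opNormOn_nonneg _ _)

lemma gradeSeminorm_nonneg (V : ℤ → Submodule ℂ F) (S : F →L[ℂ] F) (n : ℤ) :
    0 ≤ gradeSeminorm V S n :=
  add_nonneg (opNormOn_nonneg _ _) (opNormOn_nonneg _ _)

section Graded

variable {E : Type*} [NormedAddCommGroup E] [InnerProductSpace ℂ E] {V : ℤ → Submodule ℂ E}

lemma le_gradeLE (hVneg : ∀ j : ℤ, j < 0 → V j = ⊥) {k n : ℤ} (hk : k ≤ n) :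
    V k ≤ gradeLE V n := by
  rcases lt_or_ge k 0 with hk0 | hk0
  · simp [hVneg k hk0]
  · exact le_iSup₂ (f := fun j (_ : j ∈ Set.Icc 0 n) => V j) k ⟨hk0, hk⟩

lemma mapsTo_gradeLE (hVneg : ∀ j : ℤ, j < 0 → V j = ⊥) {S : E →L[ℂ] E} {d : ℤ}
    (hS : ∀ k : ℤ, ∀ x ∈ V k, S x ∈ V (k + d)) (n : ℤ) :
    Set.MapsTo S (gradeLE V n) (gradeLE V (n + d)) := by
  suffices gradeLE V n ≤ (gradeLE V (n + d)).comap (S : E →ₗ[ℂ] E) from fun x hx => this hx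
  refine iSup₂_le fun k hk x hx => ?_
  exact le_gradeLE hVneg (add_le_add_left hk.2 d) (hS k x hx)

end Graded

theorem gradeSeminorm_mul_le_general
    (V : ℤ → Submodule ℂ F)
    (hVneg : ∀ j : ℤ, j < 0 → V j = ⊥)
    (m m' : ℤ) (T T' : F →L[ℂ] F)
    (hTadj : ∀ k : ℤ, ∀ x ∈ V k, adjoint T x ∈ V (k - m))
    (hT' : ∀ k : ℤ, ∀ x ∈ V k, T' x ∈ V (k + m'))
    (n : ℤ) :
    gradeSeminorm V (T ∘L T') n ≤
      gradeSeminorm V T (n + m') * gradeSeminorm V T' n +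
      gradeSeminorm V T n * gradeSeminorm V T' (n - m) := by
  have hfwd := opNormOn_comp_le (S := T) (mapsTo_gradeLE hVneg hT' n)
  have hbwd := opNormOn_comp_le (S := adjoint T')
    (mapsTo_gradeLE hVneg (d := -m) (fun k x hx => sub_eq_add_neg k m ▸ hTadj k x hx) n)
  rw [← sub_eq_add_neg, ← adjoint_comp] at hbwd
  calc gradeSeminorm V (T ∘L T') n
      = opNormOn (gradeLE V n) (T ∘L T') + opNormOn (gradeLE V n) (adjoint (T ∘L T')) :=
        gradeSeminorm_eq V _ n
    _ ≤ opNormOn (gradeLE V (n + m')) T * opNormOn (gradeLE V n) T' +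
          opNormOn (gradeLE V n) (adjoint T) * opNormOn (gradeLE V (n - m)) (adjoint T') := by
      rw [mul_comm (opNormOn _ (adjoint T))]
      exact add_le_add hfwd hbwd
    _ ≤ _ := add_le_add
      (mul_le_mul (opNormOn_le_gradeSeminorm V T _) (opNormOn_le_gradeSeminorm V T' _)
        (opNormOn_nonneg _ _) (gradeSeminorm_nonneg V T _))
      (mul_le_mul (opNormOn_adjoint_le_gradeSeminorm V T _)
        (opNormOn_adjoint_le_gradeSeminorm V T' _) (opNormOn_nonneg _ _)
        (gradeSeminorm_nonneg V T _))

/-- If `T` is a tensor of degree `m` and `T'` a tensor of degree `m'`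
on the graded Hilbert space `F = ⊕_k F_k` (with `F_j = 0` for `j < 0`), then the
seminorms defined above satisfy
`‖T T'‖_n ≤ ‖T‖_{n+m'} ‖T'‖_n + ‖T‖_n ‖T'‖_{n−m}`,
with the convention `‖·‖_k = 0` for `k < 0`. -/
theorem gradeSeminorm_mul_le
    (V : ℤ → Submodule ℂ F)
    (hVneg : ∀ j : ℤ, j < 0 → V j = ⊥)
    (hVorth : ∀ j k, j ≠ k → ∀ x ∈ V j, ∀ y ∈ V k, (inner ℂ x y : ℂ) = 0)
    (hVdecomp : ∀ x : F, ∃ c : ℤ → F, (∀ k, c k ∈ V k) ∧ HasSum c x)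
    (m m' : ℤ) (T T' : F →L[ℂ] F)
    (hT : ∀ k : ℤ, ∀ x ∈ V k, T x ∈ V (k + m))
    (hTadj : ∀ k : ℤ, ∀ x ∈ V k, adjoint T x ∈ V (k - m))
    (hT' : ∀ k : ℤ, ∀ x ∈ V k, T' x ∈ V (k + m'))
    (hT'adj : ∀ k : ℤ, ∀ x ∈ V k, adjoint T' x ∈ V (k - m'))
    (n : ℤ) (hn : 0 ≤ n) :
    gradeSeminorm V (T ∘L T') n ≤
      gradeSeminorm V T (n + m') * gradeSeminorm V T' n +
      gradeSeminorm V T n * gradeSeminorm V T' (n - m) :=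
  gradeSeminorm_mul_le_general V hVneg m m' T T' hTadj hT' n
end

section
/- Let s ↦ B(s) be a strongly continuous, uniformly bounded map from [0,t] into bounded operators on a Hilbert space H₁, whose integrals ∫₀^r B(s)ds lie in a C*-algebra B₁ ⊆ B(H₁) for all r ∈ [0,t]. Let s ↦ λ(s) be a norm-continuous map into bounded linear maps B(H₁) → B(H₂) such that each λ(s) is weak-operator (normal) continuous on bounded sets and λ(s)(B₁) ⊆ B₂ for a C*-algebra B₂ ⊆ B(H₂). Then ∫₀^t λ(s)(B(s)) ds (strong operator integral) lies in B₂, and is the norm limit as m → ∞ of the Riemann-type sums Σ_{l=1}^m λ(lt/m)(∫_{(l−1)t/m}^{lt/m} B(s) ds). -/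
open ContinuousLinearMap Filter

/-!
Each `λ(s)` commutes with the strong integral: `v ↦ λ(s)(∫_a^v B) y` has derivative
`λ(s)(B v) y`, because the difference quotients `(v' - v)⁻¹ ∫_v^{v'} B` are bounded by `Cb` and
converge strongly to `B v`, exactly the kind of limit normality lets `λ(s)` pass through.
So the `l`-th Riemann term applied to `y` is the integral of `λ(lt/m)(B s) y` over the `l`-th
subinterval, and replacing `λ(lt/m)` by `λ(s)` there costs at most `ε Cb ‖y‖ t/m`, where `ε`
bounds the oscillation of `λ` over distances `t/m` on `[0,t]` (small by uniform continuity).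
Hence the sums converge to `J` in operator norm. Each sum lies in `S₂` because
`∫_r^{r'} B = Iop 0 r' - Iop 0 r ∈ S₁`, and `S₂` is closed.
-/

open MeasureTheory Topology

section

variable {E E' F F' : Type*}
  [NormedAddCommGroup E] [NormedSpace ℂ E] [NormedAddCommGroup E'] [NormedSpace ℂ E']
  [NormedAddCommGroup F] [NormedSpace ℂ F] [NormedAddCommGroup F'] [NormedSpace ℂ F']

/-- The form in which normality of `λ(s)` is used: sequential strong-operator continuity on
norm-bounded sets. -/
def BoundedStrongSeqContinuous (Λ : (E →L[ℂ] E') → F →L[ℂ] F') : Prop :=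
  ∀ (C : ℝ) (b : ℕ → E →L[ℂ] E') (b₀ : E →L[ℂ] E'), (∀ k, ‖b k‖ ≤ C) →
    (∀ x, Tendsto (fun k => b k x) atTop (𝓝 (b₀ x))) →
    ∀ y, Tendsto (fun k => Λ (b k) y) atTop (𝓝 (Λ b₀ y))

theorem BoundedStrongSeqContinuous.continuous_apply {X : Type*} [TopologicalSpace X]
    [FirstCountableTopology X] {Λ : (E →L[ℂ] E') → F →L[ℂ] F'}
    (hΛ : BoundedStrongSeqContinuous Λ) {B : X → E →L[ℂ] E'}
    (hB : ∀ x, Continuous fun s => B s x) {C : ℝ} (hC : ∀ s, ‖B s‖ ≤ C) (y : F) :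
    Continuous fun s => Λ (B s) y :=
  continuous_iff_seqContinuous.2 fun {u s} hu =>
    hΛ C (B ∘ u) (B s) (fun _ => hC _) (fun x => ((hB x).tendsto s).comp hu) y

theorem continuous_apply_apply_of_boundedStrongSeqContinuous {X : Type*} [TopologicalSpace X]
    [FirstCountableTopology X] {lam : X → (E →L[ℂ] E') →L[ℂ] F →L[ℂ] F'}
    (hlam : Continuous lam) (hnormal : ∀ s, BoundedStrongSeqContinuous (lam s))
    {B : X → E →L[ℂ] E'} (hB : ∀ x, Continuous fun s => B s x) {C : ℝ}
    (hC : ∀ s, ‖B s‖ ≤ C) (y : F) :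
    Continuous fun s => lam s (B s) y := by
  refine continuous_iff_continuousAt.2 fun s₀ => ?_
  have hfixed := ((hnormal s₀).continuous_apply hB hC y).tendsto s₀
  have hvary : Tendsto (fun s => (lam s - lam s₀) (B s) y) (𝓝 s₀) (𝓝 0) := by
    refine squeeze_zero_norm (fun s => ?_) (a := fun s => ‖lam s - lam s₀‖ * C * ‖y‖) ?_
    · grw [le_opNorm₂, hC s]
    · have hlam₀ : Tendsto lam (𝓝 s₀) (𝓝 (lam s₀)) := hlam.tendsto s₀
      have h := (tendsto_iff_norm_sub_tendsto_zero (f := lam) (b := lam s₀)).1 hlam₀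
      simpa using (h.mul_const C).mul_const ‖y‖
  simpa [ContinuousAt] using hvary.add hfixed

section StrongIntegral

variable {B : ℝ → E →L[ℂ] E'} {I : ℝ → ℝ → E →L[ℂ] E'}

theorem strongIntegral_add_adjacent (hB : ∀ x, Continuous fun s => B s x)
    (hI : ∀ r r' x, I r r' x = ∫ s in r..r', B s x) (u v w : ℝ) :
    I u v + I v w = I u w := by
  ext x
  rw [add_apply, hI, hI, hI, intervalIntegral.integral_add_adjacent_intervals
    ((hB x).intervalIntegrable u v) ((hB x).intervalIntegrable v w)]

theorem strongIntegral_self (hI : ∀ r r' x, I r r' x = ∫ s in r..r', B s x) (r : ℝ) :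
    I r r = 0 := by
  ext x
  rw [hI, intervalIntegral.integral_same, zero_apply]

theorem norm_smul_strongIntegral_le {C : ℝ} (hC : ∀ s, ‖B s‖ ≤ C)
    (hI : ∀ r r' x, I r r' x = ∫ s in r..r', B s x) (r v : ℝ) :
    ‖(v - r)⁻¹ • I r v‖ ≤ C := by
  have hC0 : 0 ≤ C := (norm_nonneg _).trans (hC 0)
  refine opNorm_le_bound _ hC0 fun x => ?_
  have hint : ‖I r v x‖ ≤ C * ‖x‖ * |v - r| := by
    rw [hI]
    exact intervalIntegral.norm_integral_le_of_norm_le_const fun s _ =>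
      (le_opNorm _ _).trans (by gcongr; exact hC s)
  calc ‖((v - r)⁻¹ • I r v) x‖ = |v - r|⁻¹ * ‖I r v x‖ := by
        rw [smul_apply, norm_smul, norm_inv, Real.norm_eq_abs]
    _ ≤ |v - r|⁻¹ * (C * ‖x‖ * |v - r|) := by gcongr
    _ = C * ‖x‖ * (|v - r|⁻¹ * |v - r|) := by ring
    _ ≤ C * ‖x‖ := mul_le_of_le_one_right (by positivity) inv_mul_le_one

theorem tendsto_smul_strongIntegral_apply [CompleteSpace E'] (hB : ∀ x, Continuous fun s => B s x)
    (hI : ∀ r r' x, I r r' x = ∫ s in r..r', B s x) (r : ℝ) (x : E) :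
    Tendsto (fun v => ((v - r)⁻¹ • I r v) x) (𝓝[≠] r) (𝓝 (B r x)) := by
  have hderiv := intervalIntegral.integral_hasDerivAt_right ((hB x).intervalIntegrable r r)
    ((hB x).stronglyMeasurableAtFilter volume _) (hB x).continuousAt
  refine (hasDerivAt_iff_tendsto_slope.1 hderiv).congr fun v => ?_
  rw [slope_def_module, intervalIntegral.integral_same, sub_zero, smul_apply, hI]

theorem BoundedStrongSeqContinuous.hasDerivAt_strongIntegral [CompleteSpace E']
    {Λ : (E →L[ℂ] E') →L[ℂ] F →L[ℂ] F'} (hΛ : BoundedStrongSeqContinuous Λ)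
    (hB : ∀ x, Continuous fun s => B s x) {C : ℝ} (hC : ∀ s, ‖B s‖ ≤ C)
    (hI : ∀ r r' x, I r r' x = ∫ s in r..r', B s x) (a r : ℝ) (y : F) :
    HasDerivAt (fun v => Λ (I a v) y) (Λ (B r) y) r := by
  have hslope : slope (fun v => Λ (I a v) y) r = fun v => Λ ((v - r)⁻¹ • I r v) y := by
    funext v
    rw [slope_def_module, ← sub_apply, ← map_sub, ← strongIntegral_add_adjacent hB hI a r v,
      add_sub_cancel_left, map_smul_of_tower, smul_apply]
  rw [hasDerivAt_iff_tendsto_slope, hslope, tendsto_iff_seq_tendsto]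
  exact fun u hu => hΛ C _ _ (fun k => norm_smul_strongIntegral_le hC hI r (u k))
    (fun x => (tendsto_smul_strongIntegral_apply hB hI r x).comp hu) y

theorem BoundedStrongSeqContinuous.map_strongIntegral_apply [CompleteSpace E'] [CompleteSpace F']
    {Λ : (E →L[ℂ] E') →L[ℂ] F →L[ℂ] F'} (hΛ : BoundedStrongSeqContinuous Λ)
    (hB : ∀ x, Continuous fun s => B s x) {C : ℝ} (hC : ∀ s, ‖B s‖ ≤ C)
    (hI : ∀ r r' x, I r r' x = ∫ s in r..r', B s x) (a b : ℝ) (y : F) :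
    Λ (I a b) y = ∫ s in a..b, Λ (B s) y := by
  rw [intervalIntegral.integral_eq_sub_of_hasDerivAt
    (fun r _ => hΛ.hasDerivAt_strongIntegral hB hC hI a r y)
    ((hΛ.continuous_apply hB hC y).intervalIntegrable a b),
    strongIntegral_self hI, map_zero, zero_apply, sub_zero]

theorem strongIntegral_mem {S : Type*} [SetLike S (E →L[ℂ] E')]
    [AddSubgroupClass S (E →L[ℂ] E')] {S₁ : S} (hB : ∀ x, Continuous fun s => B s x)
    (hI : ∀ r r' x, I r r' x = ∫ s in r..r', B s x) {t : ℝ}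
    (hmem : ∀ r ∈ Set.Icc 0 t, I 0 r ∈ S₁)
    {r r' : ℝ} (hr : r ∈ Set.Icc 0 t) (hr' : r' ∈ Set.Icc 0 t) : I r r' ∈ S₁ := by
  rw [eq_sub_of_add_eq' (strongIntegral_add_adjacent hB hI 0 r r')]
  exact sub_mem (hmem r' hr') (hmem r hr)

end StrongIntegral

section RiemannSum

variable [CompleteSpace E'] [CompleteSpace F'] {B : ℝ → E →L[ℂ] E'} {I : ℝ → ℝ → E →L[ℂ] E'}
  {lam : ℝ → (E →L[ℂ] E') →L[ℂ] F →L[ℂ] F'}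

theorem norm_map_strongIntegral_sub_integral_le
    (hlam : Continuous lam) (hnormal : ∀ s, BoundedStrongSeqContinuous (lam s))
    (hB : ∀ x, Continuous fun s => B s x) {C : ℝ} (hC : ∀ s, ‖B s‖ ≤ C)
    (hI : ∀ r r' x, I r r' x = ∫ s in r..r', B s x) {a b τ ε : ℝ} (hab : a ≤ b)
    (hτ : ∀ s ∈ Set.Icc a b, ‖lam τ - lam s‖ ≤ ε) (y : F) :
    ‖lam τ (I a b) y - ∫ s in a..b, lam s (B s) y‖ ≤ ε * C * ‖y‖ * (b - a) := by
  rw [(hnormal τ).map_strongIntegral_apply hB hC hI, ← intervalIntegral.integral_sub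
    (((hnormal τ).continuous_apply hB hC y).intervalIntegrable a b)
    ((continuous_apply_apply_of_boundedStrongSeqContinuous hlam hnormal hB hC
      y).intervalIntegrable a b), ← abs_of_nonneg (sub_nonneg.2 hab)]
  refine intervalIntegral.norm_integral_le_of_norm_le_const fun s hs => ?_
  rw [Set.uIoc_of_le hab] at hs
  calc ‖lam τ (B s) y - lam s (B s) y‖ = ‖(lam τ - lam s) (B s) y‖ := by
        rw [sub_apply, sub_apply]
    _ ≤ ‖lam τ - lam s‖ * ‖B s‖ * ‖y‖ := le_opNorm₂ _ _ _
    _ ≤ ε * C * ‖y‖ := by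
        have hτs := hτ s (Set.Ioc_subset_Icc_self hs)
        have hε : 0 ≤ ε := (norm_nonneg (lam τ - lam s)).trans hτs
        grw [hτs, hC s]

theorem norm_sum_map_strongIntegral_sub_integral_le
    (hlam : Continuous lam) (hnormal : ∀ s, BoundedStrongSeqContinuous (lam s))
    (hB : ∀ x, Continuous fun s => B s x) {C : ℝ} (hC : ∀ s, ‖B s‖ ≤ C)
    (hI : ∀ r r' x, I r r' x = ∫ s in r..r', B s x) {a : ℕ → ℝ} (ha : Monotone a) {m : ℕ}
    {ε : ℝ} (hmesh : ∀ k < m, ∀ s ∈ Set.Icc (a k) (a (k + 1)), ‖lam (a (k + 1)) - lam s‖ ≤ ε)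
    (y : F) :
    ‖∑ k ∈ Finset.range m, lam (a (k + 1)) (I (a k) (a (k + 1))) y
        - ∫ s in a 0..a m, lam s (B s) y‖ ≤ ε * C * ‖y‖ * (a m - a 0) := by
  have hcont := continuous_apply_apply_of_boundedStrongSeqContinuous hlam hnormal hB hC y
  rw [← intervalIntegral.sum_integral_adjacent_intervals fun k _ => hcont.intervalIntegrable _ _,
    ← Finset.sum_sub_distrib, ← Finset.sum_range_sub, Finset.mul_sum]
  refine (norm_sum_le _ _).trans (Finset.sum_le_sum fun k hk => ?_)
  exact norm_map_strongIntegral_sub_integral_le hlam hnormal hB hC hI (ha k.le_succ)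
    (hmesh k (Finset.mem_range.1 hk)) y

theorem mul_div_mem_Icc {l m t : ℝ} (ht : 0 ≤ t) (hl : 0 ≤ l) (hlm : l ≤ m) :
    l * t / m ∈ Set.Icc 0 t := by
  have hm : 0 ≤ m := hl.trans hlm
  exact ⟨div_nonneg (mul_nonneg hl ht) hm, div_le_of_le_mul₀ hm ht (by nlinarith)⟩

theorem norm_riemannSum_sub_le {t : ℝ} (ht : 0 ≤ t)
    (hlam : Continuous lam) (hnormal : ∀ s, BoundedStrongSeqContinuous (lam s))
    (hB : ∀ x, Continuous fun s => B s x) {C : ℝ} (hC : ∀ s, ‖B s‖ ≤ C)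
    (hI : ∀ r r' x, I r r' x = ∫ s in r..r', B s x) {J : F →L[ℂ] F'}
    (hJ : ∀ y, J y = ∫ s in (0:ℝ)..t, lam s (B s) y) {m : ℕ} (hm : m ≠ 0) {ε : ℝ}
    (hlamε : ∀ s ∈ Set.Icc 0 t, ∀ s' ∈ Set.Icc 0 t, |s - s'| ≤ t / m → ‖lam s - lam s'‖ ≤ ε) :
    ‖(∑ l ∈ Finset.Icc 1 m,
        lam ((l : ℝ) * t / m) (I (((l : ℝ) - 1) * t / m) ((l : ℝ) * t / m))) - J‖
      ≤ ε * C * t := by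
  have hm0 : (m : ℝ) ≠ 0 := Nat.cast_ne_zero.2 hm
  have hε : 0 ≤ ε := (norm_nonneg (lam 0 - lam 0)).trans
    (hlamε 0 ⟨le_rfl, ht⟩ 0 ⟨le_rfl, ht⟩ (by rw [sub_self, abs_zero]; positivity))
  have hC0 : 0 ≤ C := (norm_nonneg _).trans (hC 0)
  set a : ℕ → ℝ := fun k => k * t / m
  have ha : Monotone a := fun i j hij => by simp only [a]; gcongr
  have hmesh : ∀ k < m, ∀ s ∈ Set.Icc (a k) (a (k + 1)), ‖lam (a (k + 1)) - lam s‖ ≤ ε := by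
    intro k hk s hs
    have hτ : a (k + 1) ∈ Set.Icc 0 t :=
      mul_div_mem_Icc ht (k + 1).cast_nonneg (by exact_mod_cast hk)
    have hs₀ : s ∈ Set.Icc 0 t :=
      ⟨(mul_div_mem_Icc ht k.cast_nonneg (by exact_mod_cast hk.le)).1.trans hs.1, hs.2.trans hτ.2⟩
    refine hlamε _ hτ _ hs₀ ?_
    have hstep : a (k + 1) - a k = t / m := by simp only [a]; push_cast; ring
    rw [abs_of_nonneg (sub_nonneg.2 hs.2)]
    linarith [hs.1]
  have hsum : ∀ y, (∑ l ∈ Finset.Icc 1 m,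
        lam ((l : ℝ) * t / m) (I (((l : ℝ) - 1) * t / m) ((l : ℝ) * t / m))) y
      = ∑ k ∈ Finset.range m, lam (a (k + 1)) (I (a k) (a (k + 1))) y := by
    intro y
    rw [sum_apply, ← Finset.Ico_add_one_right_eq_Icc, Finset.sum_Ico_eq_sum_range,
      Nat.add_sub_cancel]
    refine Finset.sum_congr rfl fun k _ => ?_
    simp only [a]
    push_cast
    rw [add_comm 1 (k : ℝ), add_sub_cancel_right]
  refine opNorm_le_bound _ (by positivity) fun y => ?_
  have h := norm_sum_map_strongIntegral_sub_integral_le hlam hnormal hB hC hI ha hmesh y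
  simp only [a, Nat.cast_zero, zero_mul, zero_div, sub_zero, mul_div_cancel_left₀ t hm0] at h
  rwa [sub_apply, hsum, hJ, mul_right_comm]

theorem tendsto_riemannSum_map_strongIntegral {t : ℝ} (ht : 0 ≤ t)
    (hlam : Continuous lam) (hnormal : ∀ s, BoundedStrongSeqContinuous (lam s))
    (hB : ∀ x, Continuous fun s => B s x) {C : ℝ} (hC : ∀ s, ‖B s‖ ≤ C)
    (hI : ∀ r r' x, I r r' x = ∫ s in r..r', B s x) {J : F →L[ℂ] F'}
    (hJ : ∀ y, J y = ∫ s in (0:ℝ)..t, lam s (B s) y) :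
    Tendsto (fun m : ℕ => ∑ l ∈ Finset.Icc 1 m,
        lam ((l : ℝ) * t / m) (I (((l : ℝ) - 1) * t / m) ((l : ℝ) * t / m)))
      atTop (𝓝 J) := by
  have hCt : 0 ≤ C * t := mul_nonneg ((norm_nonneg _).trans (hC 0)) ht
  refine Metric.tendsto_nhds.2 fun ε hε => ?_
  have hUC : UniformContinuousOn lam (Set.Icc 0 t) :=
    isCompact_Icc.uniformContinuousOn_of_continuous hlam.continuousOn
  obtain ⟨δ, hδ, hlamδ⟩ :=
    (Metric.uniformContinuousOn_iff_le (f := lam)).1 hUC (ε / (C * t + 1)) (by positivity)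
  filter_upwards [(tendsto_const_div_atTop_nhds_zero_nat t).eventually (eventually_le_nhds hδ),
    eventually_ne_atTop 0] with m hmδ hm
  have hnorm := norm_riemannSum_sub_le ht hlam hnormal hB hC hI hJ hm fun s hs s' hs' hss' => by
    rw [← dist_eq_norm (lam s) (lam s')]
    exact hlamδ s hs s' hs' (hss'.trans hmδ)
  rw [dist_eq_norm]
  refine hnorm.trans_lt ?_
  rw [mul_assoc, div_mul_eq_mul_div, div_lt_iff₀ (by positivity)]
  nlinarith

end RiemannSum

end

theorem normal_map_integral_in_algebra_general {H₁ H₂ : Type*}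
    [NormedAddCommGroup H₁] [InnerProductSpace ℂ H₁] [CompleteSpace H₁]
    [NormedAddCommGroup H₂] [InnerProductSpace ℂ H₂] [CompleteSpace H₂]
    (S₁ : StarSubalgebra ℂ (H₁ →L[ℂ] H₁))
    (S₂ : StarSubalgebra ℂ (H₂ →L[ℂ] H₂)) (hS₂ : IsClosed (S₂ : Set (H₂ →L[ℂ] H₂)))
    (t : ℝ) (ht : 0 ≤ t)
    (B : ℝ → H₁ →L[ℂ] H₁)
    (hBcont : ∀ x : H₁, Continuous fun s : ℝ => B s x)
    (Cb : ℝ) (hBbdd : ∀ s : ℝ, ‖B s‖ ≤ Cb)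
    (Iop : ℝ → ℝ → (H₁ →L[ℂ] H₁))
    (hIop : ∀ (r r' : ℝ) (x : H₁), Iop r r' x = ∫ s in r..r', B s x)
    (hImem : ∀ r ∈ Set.Icc (0:ℝ) t, Iop 0 r ∈ S₁)
    (lam : ℝ → (H₁ →L[ℂ] H₁) →L[ℂ] (H₂ →L[ℂ] H₂))
    (hlamcont : Continuous lam)
    (hlamnormal : ∀ (s : ℝ) (Cbd : ℝ) (b : ℕ → H₁ →L[ℂ] H₁) (blim : H₁ →L[ℂ] H₁),
      (∀ k, ‖b k‖ ≤ Cbd) →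
      (∀ x : H₁, Tendsto (fun k => b k x) atTop (nhds (blim x))) →
      ∀ y : H₂, Tendsto (fun k => (lam s (b k)) y) atTop (nhds ((lam s blim) y)))
    (hlammem : ∀ s : ℝ, ∀ a ∈ S₁, lam s a ∈ S₂)
    (J : H₂ →L[ℂ] H₂)
    (hJ : ∀ y : H₂, J y = ∫ s in (0:ℝ)..t, (lam s (B s)) y) :
    J ∈ S₂ ∧
    Tendsto (fun m : ℕ =>
        ∑ l ∈ Finset.Icc 1 m,
          lam ((l : ℝ) * t / m) (Iop (((l : ℝ) - 1) * t / m) ((l : ℝ) * t / m)))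
      atTop (nhds J) := by
  have hsum_mem : ∀ m : ℕ, (∑ l ∈ Finset.Icc 1 m,
      lam ((l : ℝ) * t / m) (Iop (((l : ℝ) - 1) * t / m) ((l : ℝ) * t / m))) ∈ S₂ := by
    refine fun m => sum_mem fun l hl => hlammem _ _ ?_
    obtain ⟨hl₁, hlm⟩ := Finset.mem_Icc.1 hl
    have hl₁' : (1 : ℝ) ≤ l := by exact_mod_cast hl₁
    have hlm' : (l : ℝ) ≤ m := by exact_mod_cast hlm
    exact strongIntegral_mem hBcont hIop hImem (mul_div_mem_Icc ht (by linarith) (by linarith))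
      (mul_div_mem_Icc ht (by linarith) hlm')
  have htend :=
    tendsto_riemannSum_map_strongIntegral ht hlamcont hlamnormal hBcont hBbdd hIop hJ
  exact ⟨hS₂.mem_of_tendsto htend (Eventually.of_forall hsum_mem), htend⟩

/-- Let `s ↦ B(s)` be a strongly continuous, uniformly bounded map
from `[0,t]` into the bounded operators on a Hilbert space `H₁`, whose strong
operator integrals `∫₀^r B(s) ds` (encoded by the operators `Iop r r'` with
`Iop r r' x = ∫_r^{r'} B(s)x ds`) lie in a norm-closed *-subalgebra `S₁ ⊆ B(H₁)`
for all `r ∈ [0,t]`.  Let `s ↦ λ(s)` be a norm-continuous map into the bounded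
linear maps `B(H₁) → B(H₂)` such that each `λ(s)` is normal (continuous from the
strong operator topology on bounded sets into the strong operator topology) and
`λ(s)(S₁) ⊆ S₂` for a norm-closed *-subalgebra `S₂ ⊆ B(H₂)`.  Then the strong
operator integral `J = ∫₀^t λ(s)(B(s)) ds` lies in `S₂` and is the norm limit of
the Riemann-type sums `Σ_{l=1}^m λ(lt/m)(∫_{(l−1)t/m}^{lt/m} B(s) ds)`. -/
theorem normal_map_integral_in_algebra {H₁ H₂ : Type*}
    [NormedAddCommGroup H₁] [InnerProductSpace ℂ H₁] [CompleteSpace H₁]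
    [NormedAddCommGroup H₂] [InnerProductSpace ℂ H₂] [CompleteSpace H₂]
    (S₁ : StarSubalgebra ℂ (H₁ →L[ℂ] H₁)) (hS₁ : IsClosed (S₁ : Set (H₁ →L[ℂ] H₁)))
    (S₂ : StarSubalgebra ℂ (H₂ →L[ℂ] H₂)) (hS₂ : IsClosed (S₂ : Set (H₂ →L[ℂ] H₂)))
    (t : ℝ) (ht : 0 ≤ t)
    (B : ℝ → H₁ →L[ℂ] H₁)
    (hBcont : ∀ x : H₁, Continuous fun s : ℝ => B s x)
    (Cb : ℝ) (hBbdd : ∀ s : ℝ, ‖B s‖ ≤ Cb)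
    (Iop : ℝ → ℝ → (H₁ →L[ℂ] H₁))
    (hIop : ∀ (r r' : ℝ) (x : H₁), Iop r r' x = ∫ s in r..r', B s x)
    (hImem : ∀ r ∈ Set.Icc (0:ℝ) t, Iop 0 r ∈ S₁)
    (lam : ℝ → (H₁ →L[ℂ] H₁) →L[ℂ] (H₂ →L[ℂ] H₂))
    (hlamcont : Continuous lam)
    (hlamnormal : ∀ (s : ℝ) (Cbd : ℝ) (b : ℕ → H₁ →L[ℂ] H₁) (blim : H₁ →L[ℂ] H₁),
      (∀ k, ‖b k‖ ≤ Cbd) →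
      (∀ x : H₁, Tendsto (fun k => b k x) atTop (nhds (blim x))) →
      ∀ y : H₂, Tendsto (fun k => (lam s (b k)) y) atTop (nhds ((lam s blim) y)))
    (hlammem : ∀ s : ℝ, ∀ a ∈ S₁, lam s a ∈ S₂)
    (J : H₂ →L[ℂ] H₂)
    (hJ : ∀ y : H₂, J y = ∫ s in (0:ℝ)..t, (lam s (B s)) y) :
    J ∈ S₂ ∧
    Tendsto (fun m : ℕ =>
        ∑ l ∈ Finset.Icc 1 m,
          lam ((l : ℝ) * t / m) (Iop (((l : ℝ) - 1) * t / m) ((l : ℝ) * t / m)))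
      atTop (nhds J) :=
  normal_map_integral_in_algebra_general S₁ S₂ hS₂ t ht B hBcont Cb hBbdd Iop hIop hImem lam
    hlamcont hlamnormal hlammem J hJ
end
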